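/- arXiv:1801.07640 — 3 statements merged into one kernel-verified Lean document; each statement's English description precedes it below -/
import Mathlib

section
/- Let n ≥ k ≥ 1 and j ≥ 2. Any hereditary k-fold banned j-ary sequence problem of length n has at most ∑_{i=0}^{k−1} (j−1)^{n−i} · C(n,i) solutions. -/
/-- The common extension `X ∧ Z` of `X : [n]∖S → [j]` and `Z : S → [j]`. -/
def mergeSeq (n j : ℕ) (S : Finset (Fin n)) (X : {i : Fin n // i ∉ S} → Fin j)
    (Z : {i : Fin n // i ∈ S} → Fin j) : Fin n → Fin j :=
  fun i => if h : i ∈ S then Z ⟨i, h⟩ else X ⟨i, h⟩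

/-- `Y` is a solution to the `k`-fold banned `j`-ary sequence problem `f` of length `n`:
for every `k`-element subset `S` of `[n]`, `Y|_S ∉ f(S, Y|_{[n]∖S})`. -/
def IsSolution (n j k : ℕ)
    (f : (S : Finset (Fin n)) → ({i : Fin n // i ∉ S} → Fin j) →
      Set ({i : Fin n // i ∈ S} → Fin j))
    (Y : Fin n → Fin j) : Prop :=
  ∀ S : Finset (Fin n), S.card = k →
    (fun i : {i : Fin n // i ∈ S} => Y i.1) ∉ f S (fun i => Y i.1)

/-- A `k`-fold banned `j`-ary sequence problem `f` of length `n` is hereditary unless there is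
a `k`-element subset `S` of `[n]` such that for each `Z_α : S → [j]` there is
`X_α : [n]∖S → [j]` with `Z_α ∉ f(S, X_α)`, and additionally, for `Z_α ≠ Z_β` the first
(least) index at which `X_α ∧ Z_α` and `X_β ∧ Z_β` differ lies in `S`. -/
def Hereditary (n j k : ℕ)
    (f : (S : Finset (Fin n)) → ({i : Fin n // i ∉ S} → Fin j) →
      Set ({i : Fin n // i ∈ S} → Fin j)) : Prop :=
  ¬ ∃ S : Finset (Fin n), S.card = k ∧
      ∃ X : ({i : Fin n // i ∈ S} → Fin j) → ({i : Fin n // i ∉ S} → Fin j),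
        (∀ Z, Z ∉ f S (X Z)) ∧
        (∀ Z₁ Z₂, Z₁ ≠ Z₂ → ∀ i : Fin n,
          (∀ m : Fin n, m < i →
            mergeSeq n j S (X Z₁) Z₁ m = mergeSeq n j S (X Z₂) Z₂ m) →
          mergeSeq n j S (X Z₁) Z₁ i ≠ mergeSeq n j S (X Z₂) Z₂ i → i ∈ S)

/-!
A set `T` of words order-shatters `S` if it contains the leaves of a complete decision tree
that queries the positions of `S`, and only those, in increasing order. Splitting words on their
first letter shows by induction on `n` that `|T| ≤ ∑ (j - 1) ^ (n - |S|)` over the sets `S`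
order-shattered by `T`: if `S'` is order-shattered by `c` of the `j` first-letter fibres, its
contribution `c · w` is at most `(j - 1) · w` (charged to the shift of `S'`, shattered by `T`
as soon as `c > 0`) plus `w` (charged to `{0} ∪` the shift, shattered by `T` when `c = j`).
The leaves of a tree witnessing that the solutions of `f` order-shatter a `k`-set are exactly
what `Hereditary` forbids, so only sets of size `< k` contribute.
-/

open Finset

section OrderShatters

variable {α : Type*} {n : ℕ}

/-- `Y Z` is the leaf reached by answering `Z i` at each queried position `i ∈ S`. -/
def OrderShatters (T : Set (Fin n → α)) (S : Finset (Fin n)) : Prop :=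
  ∃ Y : (Fin n → α) → (Fin n → α), (∀ Z, Y Z ∈ T) ∧ (∀ Z, ∀ i ∈ S, Y Z i = Z i) ∧
    ∀ Z₁ Z₂ i, (∀ m < i, Y Z₁ m = Y Z₂ m) → Y Z₁ i ≠ Y Z₂ i → i ∈ S

theorem orderShatters_empty_of_mem {T : Set (Fin n → α)} {y : Fin n → α} (hy : y ∈ T) :
    OrderShatters T ∅ :=
  ⟨fun _ => y, fun _ => hy, by simp, fun _ _ _ _ h => (h rfl).elim⟩

theorem OrderShatters.mono [Nonempty α] {T : Set (Fin n → α)} {S S₀ : Finset (Fin n)}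
    (h : OrderShatters T S) (hS₀ : S₀ ⊆ S) : OrderShatters T S₀ := by
  classical
  obtain ⟨Y, hYT, hYS, hYord⟩ := h
  let restrict (Z : Fin n → α) (i : Fin n) : α := if i ∈ S₀ then Z i else Classical.arbitrary α
  refine ⟨Y ∘ restrict, fun Z => hYT _, fun Z i hi => ?_, fun Z₁ Z₂ i hpre hne => ?_⟩
  · simp [hYS _ i (hS₀ hi), restrict, hi]
  · have hiS := hYord _ _ i hpre hne
    by_contra hi
    exact hne (by simp [hYS _ i hiS, restrict, hi])

theorem OrderShatters.map_succ {T : Set (Fin (n + 1) → α)} {S : Finset (Fin n)} {a : α}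
    (h : OrderShatters {t : Fin n → α | Fin.cons a t ∈ T} S) :
    OrderShatters T (S.map (Fin.succEmb n)) := by
  obtain ⟨Y, hYT, hYS, hYord⟩ := h
  refine ⟨fun Z => Fin.cons a (Y (Fin.tail Z)), fun Z => hYT _, ?_, fun Z₁ Z₂ i hpre hne => ?_⟩
  · simp only [mem_map, Fin.coe_succEmb, forall_exists_index, and_imp]
    rintro Z _ m hm rfl
    simpa [Fin.tail] using hYS (Fin.tail Z) m hm
  · cases i using Fin.cases with
    | zero => simp at hne
    | succ m =>
      refine mem_map_of_mem _ (hYord _ _ m (fun m' hm' => ?_) (by simpa using hne))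
      simpa using hpre m'.succ (Fin.succ_lt_succ_iff.2 hm')

theorem OrderShatters.insert_zero_map_succ {T : Set (Fin (n + 1) → α)} {S : Finset (Fin n)}
    (h : ∀ a, OrderShatters {t : Fin n → α | Fin.cons a t ∈ T} S) :
    OrderShatters T (insert 0 (S.map (Fin.succEmb n))) := by
  choose Y hYT hYS hYord using h
  refine ⟨fun Z => Fin.cons (Z 0) (Y (Z 0) (Fin.tail Z)), fun Z => hYT _ _, ?_,
    fun Z₁ Z₂ i hpre hne => ?_⟩
  · simp only [mem_insert, mem_map, Fin.coe_succEmb]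
    rintro Z _ (rfl | ⟨m, hm, rfl⟩)
    · rfl
    · simpa [Fin.tail] using hYS (Z 0) (Fin.tail Z) m hm
  · cases i using Fin.cases with
    | zero => exact mem_insert_self _ _
    | succ m =>
      have h0 : Z₁ 0 = Z₂ 0 := by simpa using hpre 0 (Fin.succ_pos m)
      simp only [Fin.cons_succ, h0] at hpre hne
      refine mem_insert_of_mem (mem_map_of_mem _ (hYord _ _ _ m (fun m' hm' => ?_) hne))
      simpa [h0] using hpre m'.succ (Fin.succ_lt_succ_iff.2 hm')

noncomputable def consPreimage (T : Finset (Fin (n + 1) → α)) (a : α) : Finset (Fin n → α) :=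
  T.preimage (fun t => Fin.cons a t) (Fin.cons_right_injective (α := fun _ => α) a).injOn

@[simp]
theorem mem_consPreimage {T : Finset (Fin (n + 1) → α)} {a : α} {t : Fin n → α} :
    t ∈ consPreimage T a ↔ Fin.cons a t ∈ T :=
  mem_preimage

theorem coe_consPreimage (T : Finset (Fin (n + 1) → α)) (a : α) :
    (consPreimage T a : Set (Fin n → α)) = {t | Fin.cons a t ∈ T} :=
  Set.ext fun _ => mem_consPreimage

theorem card_eq_sum_card_consPreimage [Fintype α] (T : Finset (Fin (n + 1) → α)) :
    #T = ∑ a, #(consPreimage T a) := by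
  classical
  rw [card_eq_sum_card_fiberwise (f := (· 0)) (t := univ) fun _ _ => mem_coe.2 (mem_univ _)]
  refine sum_congr rfl fun a _ => card_nbij' Fin.tail (fun t => Fin.cons a t) ?_ ?_ ?_ ?_
  · rintro Y hY
    simp only [coe_filter, Set.mem_ofPred_eq] at hY
    simp [← hY.2, hY.1]
  · intro t ht
    simpa using ht
  · rintro Y hY
    simp only [coe_filter, Set.mem_ofPred_eq] at hY
    simp [← hY.2]
  · intro t _
    simp

theorem sum_finset_fin_succ {M : Type*} [AddCommMonoid M] (g : Finset (Fin (n + 1)) → M) :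
    ∑ S, g S =
      ∑ S : Finset (Fin n), (g (S.map (Fin.succEmb n)) + g (insert 0 (S.map (Fin.succEmb n)))) := by
  have hpow (e : Fin n ↪ Fin (n + 1)) :
      (univ.map e).powerset = univ.map (mapEmbedding e).toEmbedding := by
    ext S
    simp [subset_map_iff, eq_comm]
  rw [← powerset_univ, Fin.univ_succ, cons_eq_insert, sum_powerset_insert (by simp),
    sum_add_distrib, hpow, sum_map, sum_map]
  rfl

theorem card_filter_mul_le [Fintype α] {P : α → Prop} [DecidablePred P] {A B : Prop}
    [Decidable A] [Decidable B] (hA : (∃ a, P a) → A) (hB : (∀ a, P a) → B) (w : ℕ) :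
    #{a | P a} * w ≤ (if A then (Fintype.card α - 1) * w else 0) + if B then w else 0 := by
  by_cases hall : ∀ a, P a
  · rw [filter_true_of_mem fun a _ => hall a, card_univ, if_pos (hB hall)]
    split_ifs with hA'
    · rw [← Nat.succ_mul]
      exact Nat.mul_le_mul_right _ (by omega)
    · have : IsEmpty α := ⟨fun a => hA' (hA ⟨a, hall a⟩)⟩
      simp
  · push Not at hall
    obtain ⟨b, hb⟩ := hall
    have hlt : #{a | P a} < Fintype.card α := card_lt_univ_of_notMem (by simpa using hb)
    by_cases hex : ∃ a, P a
    · rw [if_pos (hA hex)]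
      exact le_add_right (Nat.mul_le_mul_right _ (by omega))
    · push Not at hex
      simp [filter_false_of_mem fun a _ => hex a]

open Classical in
theorem card_le_sum_orderShatters [Fintype α] (T : Finset (Fin n → α)) :
    #T ≤ ∑ S, if OrderShatters (T : Set (Fin n → α)) S then (Fintype.card α - 1) ^ (n - #S)
      else 0 := by
  induction n with
  | zero =>
    rcases T.eq_empty_or_nonempty with rfl | ⟨y, hy⟩
    · simp
    · rw [Fintype.sum_subsingleton _ ∅, if_pos (orderShatters_empty_of_mem (mem_coe.2 hy))]
      exact card_le_one_of_subsingleton T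
  | succ n ih =>
    set q := Fintype.card α - 1
    set g : Finset (Fin (n + 1)) → ℕ :=
      fun S => if OrderShatters (T : Set (Fin (n + 1) → α)) S then q ^ (n + 1 - #S) else 0
    have hstep (S : Finset (Fin n)) :
        #{a | OrderShatters (consPreimage T a : Set (Fin n → α)) S} * q ^ (n - #S) ≤
          g (S.map (Fin.succEmb n)) + g (insert 0 (S.map (Fin.succEmb n))) := by
      have hS : #S ≤ n := by simpa using card_le_univ S
      simp only [g]
      rw [card_insert_of_notMem (by simp), card_map, show n + 1 - #S = n - #S + 1 by omega,
        pow_succ', show n + 1 - (#S + 1) = n - #S by omega]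
      refine card_filter_mul_le ?_ ?_ _
      · rintro ⟨a, ha⟩
        exact OrderShatters.map_succ (a := a) (by rwa [coe_consPreimage] at ha)
      · intro hall
        exact OrderShatters.insert_zero_map_succ fun a => by simpa [coe_consPreimage] using hall a
    calc #T = ∑ a, #(consPreimage T a) := card_eq_sum_card_consPreimage T
      _ ≤ ∑ a, ∑ S, if OrderShatters (consPreimage T a : Set (Fin n → α)) S
            then q ^ (n - #S) else 0 :=
        sum_le_sum fun a _ => ih _
      _ = ∑ S : Finset (Fin n),
            #{a | OrderShatters (consPreimage T a : Set (Fin n → α)) S} * q ^ (n - #S) := by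
        rw [sum_comm]
        simp only [sum_ite, sum_const_zero, add_zero, sum_const, smul_eq_mul]
      _ ≤ _ := sum_le_sum fun S _ => hstep S
      _ = ∑ S, g S := (sum_finset_fin_succ g).symm

theorem sum_ite_card_lt_eq (k : ℕ) (g : ℕ → ℕ) :
    ∑ S : Finset (Fin n), (if #S < k then g #S else 0) = ∑ i ∈ range k, g i * n.choose i := by
  calc ∑ S : Finset (Fin n), (if #S < k then g #S else 0)
      = ∑ S with #S < k, g #S := (sum_filter _ _).symm
    _ = ∑ i ∈ range k, ∑ S ∈ {S : Finset (Fin n) | #S < k} with #S = i, g #S :=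
      (sum_fiberwise_of_maps_to (fun S hS => by simpa using hS) _).symm
    _ = ∑ i ∈ range k, ∑ S ∈ powersetCard i (univ : Finset (Fin n)), g i := by
      refine sum_congr rfl fun i hi => sum_congr ?_ ?_
      · ext S
        simp only [mem_filter, mem_univ, true_and, mem_powersetCard, subset_univ]
        have := mem_range.1 hi
        omega
      · intro S hS
        rw [(mem_powersetCard.1 hS).2]
    _ = ∑ i ∈ range k, g i * n.choose i := by
      simp [card_powersetCard, mul_comm]

end OrderShatters

theorem Hereditary.card_lt_of_orderShatters {n j k : ℕ}
    {f : (S : Finset (Fin n)) → ({i : Fin n // i ∉ S} → Fin j) →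
      Set ({i : Fin n // i ∈ S} → Fin j)}
    (hj : 0 < j) (hher : Hereditary n j k f) {S : Finset (Fin n)}
    (hS : OrderShatters {Y | IsSolution n j k f Y} S) : #S < k := by
  by_contra! hkS
  obtain ⟨S₀, hS₀S, hS₀⟩ := exists_subset_card_eq hkS
  have : Nonempty (Fin j) := ⟨⟨0, hj⟩⟩
  obtain ⟨Y, hYT, hYS, hYord⟩ := hS.mono hS₀S
  let extend (Z : {i // i ∈ S₀} → Fin j) : Fin n → Fin j := mergeSeq n j S₀ (fun _ => ⟨0, hj⟩) Z
  have hmerge (Z : {i // i ∈ S₀} → Fin j) :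
      mergeSeq n j S₀ (fun i => Y (extend Z) i) Z = Y (extend Z) := by
    funext m
    by_cases hm : m ∈ S₀
    · simp [mergeSeq, hm, hYS _ m hm, extend]
    · simp [mergeSeq, hm]
  refine hher ⟨S₀, hS₀, fun Z i => Y (extend Z) i, fun Z hZ => hYT (extend Z) S₀ hS₀ ?_,
    fun Z₁ Z₂ _ i => ?_⟩
  · have hrestrict : (fun i : {i // i ∈ S₀} => Y (extend Z) i) = Z :=
      funext fun i => by simp [hYS _ _ i.2, extend, mergeSeq]
    rwa [hrestrict]
  · rw [hmerge, hmerge]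
    exact hYord _ _ i

theorem hereditary_jary_card_solutions_le_general (n j k : ℕ)
    (hj : 2 ≤ j)
    (f : (S : Finset (Fin n)) → ({i : Fin n // i ∉ S} → Fin j) →
      Set ({i : Fin n // i ∈ S} → Fin j))
    (hher : Hereditary n j k f) :
    {Y : Fin n → Fin j | IsSolution n j k f Y}.ncard ≤
      ∑ i ∈ Finset.range k, (j - 1) ^ (n - i) * n.choose i := by
  classical
  set T := {Y : Fin n → Fin j | IsSolution n j k f Y}
  calc T.ncard = #T.toFinset := Set.ncard_eq_toFinset_card' T
    _ ≤ ∑ S, if OrderShatters T S then (j - 1) ^ (n - #S) else 0 := by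
      simpa using card_le_sum_orderShatters T.toFinset
    _ ≤ ∑ S : Finset (Fin n), if #S < k then (j - 1) ^ (n - #S) else 0 := by
      refine sum_le_sum fun S _ => ?_
      by_cases hS : OrderShatters T S
      · rw [if_pos hS, if_pos (hher.card_lt_of_orderShatters (by omega) hS)]
      · rw [if_neg hS]
        exact Nat.zero_le _
    _ = ∑ i ∈ Finset.range k, (j - 1) ^ (n - i) * n.choose i :=
      sum_ite_card_lt_eq k fun i => (j - 1) ^ (n - i)

/-- Any hereditary `k`-fold banned `j`-ary sequence problem of length `n`
(with `n ≥ k ≥ 1`, `j ≥ 2`) has at most `∑_{i=0}^{k−1} (j−1)^{n−i}·C(n,i)` solutions. -/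
theorem hereditary_jary_card_solutions_le (n j k : ℕ) (hk : 1 ≤ k) (hkn : k ≤ n)
    (hj : 2 ≤ j)
    (f : (S : Finset (Fin n)) → ({i : Fin n // i ∉ S} → Fin j) →
      Set ({i : Fin n // i ∈ S} → Fin j))
    (hne : ∀ (S : Finset (Fin n)) (X : {i : Fin n // i ∉ S} → Fin j),
      S.card = k → (f S X).Nonempty)
    (hher : Hereditary n j k f) :
    {Y : Fin n → Fin j | IsSolution n j k f Y}.ncard ≤
      ∑ i ∈ Finset.range k, (j - 1) ^ (n - i) * n.choose i :=
  hereditary_jary_card_solutions_le_general n j k hj f hher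
end

section
/- Let (X, F) be a set system with opR_r(F) = a < ∞ (r ≥ 1, a ≥ 0). Then for any s ≥ 1 and any elements x₀, …, x_{s−1} ∈ X, the number of functions σ : [s] → {0,1} for which the child F_σ satisfies opR_r(F_σ) ≤ a − 1 is at least 2^s − ∑_{i=0}^{r−1} C(s,i). -/
/-- A leaf `ξ ∈ (2^r)^n` of a `2^r`-ary element tree `T` is properly labeled by `A ⊆ X`
if for all `j < n` and `i < r`, the `i`-th coordinate of the label of the initial segment
`ξ|_{[j]}` belongs to `A` iff `ξ(j)(i) = 1`. -/
def OpProper {X : Type*} {r : ℕ} (T : List (Fin r → Bool) → (Fin r → X)) {n : ℕ}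
    (ξ : Fin n → (Fin r → Bool)) (A : Set X) : Prop :=
  ∀ (j : Fin n) (i : Fin r), (T ((List.ofFn ξ).take j.1) i ∈ A ↔ ξ j i = true)

/-- There is a `2^r`-ary element tree of height `k` with labels from `X` in which every leaf
is properly labeled by some member of `F`. -/
def HasOpTree {X : Type*} (F : Set (Set X)) (r k : ℕ) : Prop :=
  ∃ T : List (Fin r → Bool) → (Fin r → X),
    ∀ ξ : Fin k → (Fin r → Bool), ∃ A ∈ F, OpProper T ξ A

/-- Given `x₀, …, x_{s−1} ∈ X` and `σ : [s] → {0,1}`, the child `F_σ` is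
`{ Y ∈ F : for all i < s, xᵢ ∈ Y iff σ(i) = 1 }`. -/
def child {X : Type*} (F : Set (Set X)) {s : ℕ} (x : Fin s → X) (σ : Fin s → Bool) :
    Set (Set X) :=
  {Y ∈ F | ∀ i : Fin s, (x i ∈ Y ↔ σ i = true)}

/-!
Call `σ` bad if `F_σ` still has an element tree of height `a`. If the bad `σ` realised all
`2^r` patterns on some `r` coordinates `i₁, …, i_r`, then a root labelled `(x_{i₁}, …, x_{i_r})`
with the trees of the corresponding bad children below it would be a tree of height `a + 1`
for `F`. So the bad `σ`, viewed as subsets of `[s]`, shatter no `r`-set, and by the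
Sauer–Shelah lemma there are at most `∑_{i<r} C(s,i)` of them.
-/

namespace HasOpTree

variable {X : Type*} {F G : Set (Set X)} {r k : ℕ}

lemma mono (hFG : F ⊆ G) (h : HasOpTree F r k) : HasOpTree G r k := by
  obtain ⟨T, hT⟩ := h
  exact ⟨T, fun ξ => (hT ξ).imp fun A ⟨hA, hξ⟩ => ⟨hFG hA, hξ⟩⟩

lemma of_succ (h : HasOpTree F r (k + 1)) : HasOpTree F r k := by
  obtain ⟨T, hT⟩ := h
  refine ⟨T, fun ξ => ?_⟩
  obtain ⟨A, hA, hξ⟩ := hT (Fin.snoc ξ fun _ => false)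
  refine ⟨A, hA, fun j i => ?_⟩
  have hprefix : (List.ofFn (Fin.snoc ξ fun _ => false : Fin (k + 1) → Fin r → Bool)).take j
      = (List.ofFn ξ).take j := by
    rw [List.ofFn_succ', List.concat_eq_append, List.take_append_of_le_length (by simp [j.2.le])]
    simp only [Fin.snoc_castSucc]
  have := hξ j.castSucc i
  rwa [Fin.val_castSucc, hprefix, Fin.snoc_castSucc] at this

lemma antitone_height : Antitone (HasOpTree F r) :=
  antitone_nat_of_succ_le fun _ => of_succ

end HasOpTree

section

variable {X : Type*} {F : Set (Set X)} {r a : ℕ}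

lemma child_subset_child_comp {s t : ℕ} (x : Fin s → X) (σ : Fin s → Bool) (e : Fin t → Fin s) :
    child F x σ ⊆ child F (x ∘ e) (σ ∘ e) :=
  fun _ ⟨hA, hσ⟩ => ⟨hA, fun i => hσ (e i)⟩

lemma hasOpTree_succ_of_forall_child (y : Fin r → X)
    (h : ∀ b : Fin r → Bool, HasOpTree (child F y b) r a) : HasOpTree F r (a + 1) := by
  choose Ts hTs using h
  refine ⟨fun | [] => y | b :: l => Ts b l, fun ξ => ?_⟩
  obtain ⟨A, ⟨hAF, hroot⟩, hprop⟩ := hTs (ξ 0) (Fin.tail ξ)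
  refine ⟨A, hAF, fun j i => ?_⟩
  induction j using Fin.cases with
  | zero => exact hroot i
  | succ j =>
    rw [List.ofFn_succ]
    exact hprop j i

end

lemma Finset.card_le_sum_choose_of_not_shatters {α : Type*} [Fintype α] [DecidableEq α]
    {𝒜 : Finset (Finset α)} {r : ℕ} (h : ∀ t : Finset α, t.card = r → ¬ 𝒜.Shatters t) :
    𝒜.card ≤ ∑ k ∈ range r, (Fintype.card α).choose k := by
  have hsmall : ∀ t ∈ 𝒜.shatterer, t.card < r := fun t ht => by
    by_contra! hrt
    obtain ⟨u, hut, hu⟩ := exists_subset_card_eq hrt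
    exact h u hu ((mem_shatterer.1 ht).mono_right hut)
  calc 𝒜.card ≤ 𝒜.shatterer.card := card_le_card_shatterer 𝒜
    _ ≤ ((range r).biUnion fun k => powersetCard k univ).card :=
      card_le_card fun t ht => mem_biUnion.2
        ⟨t.card, mem_range.2 (hsmall t ht), mem_powersetCard_univ.2 rfl⟩
    _ ≤ ∑ k ∈ range r, (powersetCard k (univ : Finset α)).card := card_biUnion_le
    _ = _ := by simp only [card_powersetCard, card_univ]

lemma card_le_sum_choose_of_not_realizes {ι : Type*} [Fintype ι] [DecidableEq ι]
    {B : Finset (ι → Bool)} {r : ℕ}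
    (h : ∀ e : Fin r ↪ ι, ¬ ∀ b : Fin r → Bool, ∃ σ ∈ B, σ ∘ e = b) :
    B.card ≤ ∑ k ∈ Finset.range r, (Fintype.card ι).choose k := by
  let supp : (ι → Bool) ↪ Finset ι :=
    ⟨fun σ => Finset.univ.filter (σ · = true), fun σ τ hστ => by
      funext i
      exact Bool.eq_iff_iff.2 (by simpa using Finset.ext_iff.1 hστ i)⟩
  rw [← Finset.card_map supp]
  refine Finset.card_le_sum_choose_of_not_shatters fun t ht hshat => ?_
  let e : Fin r ↪ ι :=
    (Fintype.equivFinOfCardEq (by simpa using ht) : t ≃ Fin r).symm.toEmbedding.trans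
      (Function.Embedding.subtype _)
  have he : ∀ j, e j ∈ t := fun j => Subtype.prop _
  refine h e fun b => ?_
  obtain ⟨v, hv, htv⟩ := hshat (t := (Finset.univ.filter (b · = true)).map e)
    (fun _ hi => by obtain ⟨j, -, rfl⟩ := Finset.mem_map.1 hi; exact he j)
  obtain ⟨σ, hσ, rfl⟩ := Finset.mem_map.1 hv
  refine ⟨σ, hσ, funext fun j => Bool.eq_iff_iff.2 ?_⟩
  have : e j ∈ t ∩ Finset.univ.filter (σ · = true) ↔
      e j ∈ (Finset.univ.filter (b · = true)).map e :=
    Finset.ext_iff.1 htv (e j)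
  simpa [he j] using this

theorem op_rank_children_drop_general {X : Type*} (F : Set (Set X)) (r a : ℕ)
    (hrank : HasOpTree F r a ∧ ∀ m : ℕ, a < m → ¬ HasOpTree F r m)
    (s : ℕ) (x : Fin s → X) :
    2 ^ s - ∑ i ∈ Finset.range r, s.choose i ≤
      {σ : Fin s → Bool |
        ∀ m : ℕ, HasOpTree (child F x σ) r m → (m : ℤ) ≤ (a : ℤ) - 1}.ncard := by
  classical
  set B := Finset.univ.filter fun σ : Fin s → Bool => HasOpTree (child F x σ) r a
  have hB : B.card ≤ ∑ i ∈ Finset.range r, s.choose i := by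
    simpa using card_le_sum_choose_of_not_realizes (B := B) fun e hall =>
      hrank.2 (a + 1) a.lt_succ_self <| hasOpTree_succ_of_forall_child (x ∘ e) fun b => by
        obtain ⟨σ, hσ, rfl⟩ := hall b
        exact (Finset.mem_filter.1 hσ).2.mono (child_subset_child_comp x σ e)
  have hgood : ((Bᶜ : Finset _) : Set (Fin s → Bool)) ⊆
      {σ | ∀ m : ℕ, HasOpTree (child F x σ) r m → (m : ℤ) ≤ (a : ℤ) - 1} := by
    intro σ hσ m hm
    by_contra! ham
    exact (Finset.mem_compl.1 hσ) (Finset.mem_filter.2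
      ⟨Finset.mem_univ σ, HasOpTree.antitone_height (by omega) hm⟩)
  calc 2 ^ s - ∑ i ∈ Finset.range r, s.choose i ≤ 2 ^ s - B.card := Nat.sub_le_sub_left hB _
    _ = Bᶜ.card := by simp [Finset.card_compl]
    _ = ((Bᶜ : Finset _) : Set (Fin s → Bool)).ncard := (Set.ncard_coe_finset _).symm
    _ ≤ _ := Set.ncard_le_ncard hgood (Set.toFinite _)

/-- If `opR_r(F) = a < ∞` (`r ≥ 1`, `a ≥ 0`), then for any `s ≥ 1` and any
`x₀, …, x_{s−1} ∈ X`, at least `2^s − ∑_{i=0}^{r−1} C(s,i)` of the children `F_σ`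
(`σ : [s] → {0,1}`) satisfy `opR_r(F_σ) ≤ a − 1`. -/
theorem op_rank_children_drop {X : Type*} (F : Set (Set X)) (r a : ℕ) (hr : 1 ≤ r)
    (hrank : HasOpTree F r a ∧ ∀ m : ℕ, a < m → ¬ HasOpTree F r m)
    (s : ℕ) (hs : 1 ≤ s) (x : Fin s → X) :
    2 ^ s - ∑ i ∈ Finset.range r, s.choose i ≤
      {σ : Fin s → Bool |
        ∀ m : ℕ, HasOpTree (child F x σ) r m → (m : ℤ) ≤ (a : ℤ) - 1}.ncard :=
  op_rank_children_drop_general F r a hrank s x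
end

section
/- Let (X, F) be a set system with opR_r(F) = a < ∞ (r ≥ 1, a ≥ 0), and let l ≥ 1. Then for any s ≥ 1 and any elements x₀, …, x_{s−1} ∈ X, the number of functions σ : [s] → {0,1} for which the child F_σ satisfies opR_r(F_σ) ≤ a − l is at least 2^s − ∑_{i=0}^{lr−1} C(s,i). -/
open Finset

theorem Finset.exists_shatters_card_eq_of_sum_choose_lt {α : Type*} [DecidableEq α] [Fintype α]
    {𝒜 : Finset (Finset α)} {d : ℕ}
    (h : ∑ k ∈ range d, (Fintype.card α).choose k < #𝒜) :
    ∃ s, 𝒜.Shatters s ∧ #s = d := by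
  have hd : d ≤ 𝒜.vcDim := by
    by_contra! hlt
    have hsub : Iic 𝒜.vcDim ⊆ range d := fun k hk => mem_range.2 ((mem_Iic.1 hk).trans_lt hlt)
    have := (card_le_card_shatterer 𝒜).trans card_shatterer_le_sum_vcDim
    have := sum_le_sum_of_subset (f := fun k => (Fintype.card α).choose k) hsub
    omega
  have h𝒜 : 𝒜.Nonempty := card_pos.1 (by omega)
  obtain ⟨s, hs, hcard⟩ := exists_mem_eq_sup 𝒜.shatterer ⟨∅, by simpa using h𝒜⟩ card
  obtain ⟨t, hts, rfl⟩ := exists_subset_card_eq (hcard ▸ hd : d ≤ #s)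
  exact ⟨t, (mem_shatterer.1 hs).mono_right hts, rfl⟩

theorem exists_embedding_forall_pattern_of_sum_choose_lt {ι κ : Type*} [Fintype ι] [Fintype κ]
    {B : Set (ι → Bool)}
    (h : ∑ k ∈ range (Fintype.card κ), (Fintype.card ι).choose k < B.ncard) :
    ∃ e : κ ↪ ι, ∀ τ : κ → Bool, ∃ σ ∈ B, ∀ k, σ (e k) = τ k := by
  classical
  let support : (ι → Bool) → Finset ι := fun σ => univ.filter (σ · = true)
  have support_inj : support.Injective := fun σ τ hστ => funext fun i => Bool.eq_iff_iff.2 <| by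
    simpa [support] using Finset.ext_iff.1 hστ i
  obtain ⟨s, hs, hcard⟩ := exists_shatters_card_eq_of_sum_choose_lt (𝒜 := B.toFinset.image support)
    (by rwa [card_image_of_injective _ support_inj, ← Set.ncard_eq_toFinset_card'])
  let e : κ ↪ ι :=
    (Fintype.equivOfCardEq (by simp [hcard]) : κ ≃ s).toEmbedding.trans (.subtype _)
  have he : ∀ k, e k ∈ s := fun k => Subtype.prop _
  refine ⟨e, fun τ => ?_⟩
  obtain ⟨u, hu, hsu⟩ := hs (show (univ.filter (τ · = true)).map e ⊆ s from
    fun i hi => by obtain ⟨k, -, rfl⟩ := mem_map.1 hi; exact he k)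
  obtain ⟨σ, hσ, rfl⟩ := mem_image.1 hu
  refine ⟨σ, Set.mem_toFinset.1 hσ, fun k => Bool.eq_iff_iff.2 ?_⟩
  simpa [support, he k] using Finset.ext_iff.1 hsu (e k)

section OpTrees

variable {X : Type*} {r : ℕ}

theorem opProper_append_iff {m n : ℕ} {T : List (Fin r → Bool) → Fin r → X}
    {ξ : Fin m → Fin r → Bool} {η : Fin n → Fin r → Bool} {A : Set X} :
    OpProper T (Fin.append ξ η) A ↔
      OpProper T ξ A ∧ OpProper (fun p => T (List.ofFn ξ ++ p)) η A := by
  simp [OpProper, Fin.forall_fin_add, List.ofFn_fin_append, List.take_append,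
    List.take_of_length_le]

theorem HasOpTree.mono_s15 {F G : Set (Set X)} {k : ℕ} (hFG : F ⊆ G) (h : HasOpTree F r k) :
    HasOpTree G r k := by
  obtain ⟨T, hT⟩ := h
  exact ⟨T, fun ξ => let ⟨A, hA, hξ⟩ := hT ξ; ⟨A, hFG hA, hξ⟩⟩

theorem HasOpTree.of_le {F : Set (Set X)} {k m : ℕ} (hkm : k ≤ m) (h : HasOpTree F r m) :
    HasOpTree F r k := by
  obtain ⟨n, rfl⟩ := Nat.exists_eq_add_of_le hkm
  obtain ⟨T, hT⟩ := h
  refine ⟨T, fun ξ => ?_⟩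
  obtain ⟨A, hA, hξ⟩ := hT (Fin.append ξ fun _ _ => false)
  exact ⟨A, hA, (opProper_append_iff.1 hξ).1⟩

theorem hasOpTree_add_of_forall_pattern {F : Set (Set X)} {l k : ℕ} (y : Fin l → Fin r → X)
    (h : ∀ τ : Fin l → Fin r → Bool,
      HasOpTree {A ∈ F | ∀ j i, y j i ∈ A ↔ τ j i = true} r k) :
    HasOpTree F r (l + k) := by
  choose Tb hTb using h
  refine ⟨fun p => if hp : p.length < l then y ⟨p.length, hp⟩
    else Tb (fun j => p[j.1]) (p.drop l), fun ξ => ?_⟩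
  obtain ⟨ξ, η, rfl⟩ : ∃ ξ' η, ξ = Fin.append ξ' η := ⟨_, _, Fin.append_castAdd_natAdd.symm⟩
  obtain ⟨A, ⟨hAF, hAy⟩, hA⟩ := hTb ξ η
  refine ⟨A, hAF, opProper_append_iff.2 ⟨fun j i => ?_, ?_⟩⟩
  · simpa [j.2] using hAy j i
  · convert hA using 1
    funext p
    simp [List.getElem_append_left]

end OpTrees

theorem op_rank_children_drop_many_general {X : Type*} (F : Set (Set X)) (r a l : ℕ)
    (hrank : HasOpTree F r a ∧ ∀ m : ℕ, a < m → ¬ HasOpTree F r m)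
    (s : ℕ) (x : Fin s → X) :
    2 ^ s - ∑ i ∈ Finset.range (l * r), s.choose i ≤
      {σ : Fin s → Bool |
        ∀ m : ℕ, HasOpTree (child F x σ) r m → (m : ℤ) ≤ (a : ℤ) - (l : ℤ)}.ncard := by
  set bad := {σ : Fin s → Bool | HasOpTree (child F x σ) r (a + 1 - l)}
  have hbad : bad.ncard ≤ ∑ i ∈ range (l * r), s.choose i := by
    by_contra! hlt
    obtain ⟨e, he⟩ := exists_embedding_forall_pattern_of_sum_choose_lt (κ := Fin l × Fin r)
      (B := bad) (by simpa using hlt)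
    refine hrank.2 (l + (a + 1 - l)) (by omega) <|
      hasOpTree_add_of_forall_pattern (fun j i => x (e (j, i))) fun τ => ?_
    obtain ⟨σ, hσ, hστ⟩ := he fun k => τ k.1 k.2
    exact hσ.mono_s15 fun A hA => ⟨hA.1, fun j i => (hA.2 _).trans (by rw [hστ])⟩
  have hgood : badᶜ ⊆ {σ | ∀ m : ℕ, HasOpTree (child F x σ) r m → (m : ℤ) ≤ a - l} :=
    fun σ hσ m hm => by
      by_contra! hlt
      exact hσ (hm.of_le (by omega))
  calc 2 ^ s - ∑ i ∈ range (l * r), s.choose i ≤ 2 ^ s - bad.ncard := by omega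
    _ = badᶜ.ncard := by
      have hsum := Set.ncard_add_ncard_compl bad
      have hcard : Nat.card (Fin s → Bool) = 2 ^ s := by simp
      omega
    _ ≤ _ := Set.ncard_le_ncard hgood

/-- If `opR_r(F) = a < ∞` (`r ≥ 1`, `a ≥ 0`) and `l ≥ 1`, then for any `s ≥ 1` and any
`x₀, …, x_{s−1} ∈ X`, at least `2^s − ∑_{i=0}^{lr−1} C(s,i)` of the children `F_σ`
(`σ : [s] → {0,1}`) satisfy `opR_r(F_σ) ≤ a − l`. -/
theorem op_rank_children_drop_many {X : Type*} (F : Set (Set X)) (r a l : ℕ) (hr : 1 ≤ r)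
    (hl : 1 ≤ l)
    (hrank : HasOpTree F r a ∧ ∀ m : ℕ, a < m → ¬ HasOpTree F r m)
    (s : ℕ) (hs : 1 ≤ s) (x : Fin s → X) :
    2 ^ s - ∑ i ∈ Finset.range (l * r), s.choose i ≤
      {σ : Fin s → Bool |
        ∀ m : ℕ, HasOpTree (child F x σ) r m → (m : ℤ) ≤ (a : ℤ) - (l : ℤ)}.ncard :=
  op_rank_children_drop_many_general F r a l hrank s x
end
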